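/- arXiv:1806.10855 — 2 statements merged into one kernel-verified Lean document; each statement's English description precedes it below -/
import Mathlib

section
/- Let 0 < q < 1 and let μ_1 ≥ μ_2 ≥ 0 be integers. Then the series Σ over all pairs of integers λ_1 ≥ λ_2 ≥ 0 of P_q(λ_1,λ_2) · s_{(μ_1,μ_2)}(q^{λ_1+1}, q^{λ_2}) / s_{(μ_1,μ_2)}(1,q) converges and equals ∏_{i=1}^{2} (1−q^i)(1−q^{i+1}) / ((1−q^{μ_i−i+3})(1−q^{μ_i−i+4})). -/
/-!
Put `x = q ^ (λ₁ + 1)` and `y = q ^ λ₂`. Since `s_λ(q, q²) = q ^ |λ| s_λ(1, q)` and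
`(1 - q) s_λ(1, q) = y - x`, the weight `P_q(λ)` is a constant times `x y (x - y)²`, while
`(x - y) s_μ(x, y)` is the alternant `x ^ (μ₁ + 1) y ^ μ₂ - y ^ (μ₁ + 1) x ^ μ₂`. Hence every
summand is a fixed combination of the four monomials `x ^ a y ^ b` with
`(a, b) ∈ {(μ₁ + 3, μ₂ + 1), (μ₂ + 1, μ₁ + 3), (μ₁ + 2, μ₂ + 2), (μ₂ + 2, μ₁ + 2)}`.
Summing `x ^ a y ^ b` over `λ₁ ≥ λ₂` is a product of two geometric series, giving
`q ^ a / ((1 - q ^ a) (1 - q ^ (a + b)))`; as `a + b = μ₁ + μ₂ + 4` in all four cases, the common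
factor `1 - q ^ (μ₁ + μ₂ + 4)` cancels and the four terms collapse to the product.
-/

/-- The two-variable Schur polynomial
`s_{(l1,l2)}(u,v) = (u^{l1+1} v^{l2} − v^{l1+1} u^{l2})/(u−v)`. -/
noncomputable def s2 (l1 l2 : ℕ) (u v : ℝ) : ℝ :=
  (u ^ (l1 + 1) * v ^ l2 - v ^ (l1 + 1) * u ^ l2) / (u - v)

/-- The Schur-measure weight
`P_q(λ1,λ2) = (1−q)(1−q²)²(1−q³) s_{(λ1,λ2)}(1,q) s_{(λ1,λ2)}(q,q²)`. -/
noncomputable def Pq (q : ℝ) (l1 l2 : ℕ) : ℝ :=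
  (1 - q) * (1 - q ^ 2) ^ 2 * (1 - q ^ 3) * s2 l1 l2 1 q * s2 l1 l2 q (q ^ 2)

lemma s2_one_left (l1 l2 : ℕ) (v : ℝ) : s2 l1 l2 1 v = (v ^ l2 - v ^ (l1 + 1)) / (1 - v) := by
  simp [s2]

lemma s2_mul_mul (l1 l2 : ℕ) {c : ℝ} (hc : c ≠ 0) (u v : ℝ) :
    s2 l1 l2 (c * u) (c * v) = c ^ (l1 + l2) * s2 l1 l2 u v := by
  rcases eq_or_ne u v with rfl | huv
  · simp [s2]
  · unfold s2
    field_simp [sub_ne_zero.mpr huv]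
    ring

lemma mul_mul_sub_sq_mul_s2 (m1 m2 : ℕ) (x y : ℝ) :
    x * y * (x - y) ^ 2 * s2 m1 m2 x y =
      x ^ (m1 + 3) * y ^ (m2 + 1) + x ^ (m2 + 1) * y ^ (m1 + 3)
        - (x ^ (m1 + 2) * y ^ (m2 + 2) + x ^ (m2 + 2) * y ^ (m1 + 2)) := by
  rcases eq_or_ne x y with rfl | hxy
  · ring
  · unfold s2
    field_simp [sub_ne_zero.mpr hxy]
    ring

lemma one_sub_mul_Pq {q : ℝ} (hq0 : q ≠ 0) (hq1 : q ≠ 1) (l1 l2 : ℕ) :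
    (1 - q) * Pq q l1 l2 =
      (1 - q ^ 2) ^ 2 * (1 - q ^ 3) * q ^ (l1 + l2) * (q ^ (l1 + 1) - q ^ l2) ^ 2 := by
  have hhom : s2 l1 l2 q (q ^ 2) = q ^ (l1 + l2) * s2 l1 l2 1 q := by
    simpa [sq] using s2_mul_mul l1 l2 hq0 1 q
  have h1q : 1 - q ≠ 0 := sub_ne_zero.mpr hq1.symm
  rw [Pq, hhom, s2_one_left]
  field_simp
  ring

lemma Pq_mul_s2_div_s2_one {q : ℝ} (hq0 : q ≠ 0) (hq1 : q ≠ 1) {m1 m2 : ℕ}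
    (hm : q ^ m2 - q ^ (m1 + 1) ≠ 0) (l1 l2 : ℕ) :
    Pq q l1 l2 * s2 m1 m2 (q ^ (l1 + 1)) (q ^ l2) / s2 m1 m2 1 q =
      (1 - q ^ 2) ^ 2 * (1 - q ^ 3) / (q * (q ^ m2 - q ^ (m1 + 1))) *
        ((q ^ (l1 + 1)) ^ (m1 + 3) * (q ^ l2) ^ (m2 + 1)
          + (q ^ (l1 + 1)) ^ (m2 + 1) * (q ^ l2) ^ (m1 + 3)
          - ((q ^ (l1 + 1)) ^ (m1 + 2) * (q ^ l2) ^ (m2 + 2)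
            + (q ^ (l1 + 1)) ^ (m2 + 2) * (q ^ l2) ^ (m1 + 2))) := by
  have h1q : 1 - q ≠ 0 := sub_ne_zero.mpr hq1.symm
  rw [s2_one_left, ← mul_mul_sub_sq_mul_s2]
  field_simp
  linear_combination (q * s2 m1 m2 (q ^ (l1 + 1)) (q ^ l2)) * one_sub_mul_Pq hq0 hq1 l1 l2

theorem hasSum_triangle_iff {α : Type*} [AddCommMonoid α] [TopologicalSpace α]
    {f : ℕ × ℕ → α} {s : α} :
    HasSum (fun l => if l.2 ≤ l.1 then f l else 0) s ↔
      HasSum (fun p : ℕ × ℕ => f (p.2 + p.1, p.2)) s := by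
  have hinj : Function.Injective (fun p : ℕ × ℕ => (p.2 + p.1, p.2)) := by
    rintro ⟨d, m⟩ ⟨d', m'⟩ h
    simp only [Prod.mk.injEq] at h
    ext <;> omega
  rw [← hinj.hasSum_iff]
  · simp [Function.comp_def]
  · rintro ⟨l1, l2⟩ hl
    exact if_neg fun h => hl ⟨(l1 - l2, l2), by simp; omega⟩

theorem hasSum_geometric_mul_geometric {r s : ℝ} (hr0 : 0 ≤ r) (hr1 : r < 1) (hs0 : 0 ≤ s)
    (hs1 : s < 1) : HasSum (fun p : ℕ × ℕ => r ^ p.1 * s ^ p.2) ((1 - r)⁻¹ * (1 - s)⁻¹) := by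
  have hr := hasSum_geometric_of_lt_one hr0 hr1
  have hs := hasSum_geometric_of_lt_one hs0 hs1
  exact hr.mul hs (hr.summable.mul_of_nonneg hs.summable (fun _ => by positivity)
    (fun _ => by positivity))

theorem hasSum_pow_mul_pow_triangle {q : ℝ} (hq0 : 0 ≤ q) (hq1 : q < 1) {a b n : ℕ}
    (ha : a ≠ 0) (hab : a + b = n) :
    HasSum (fun p : ℕ × ℕ => (q ^ (p.2 + p.1 + 1)) ^ a * (q ^ p.2) ^ b)
      (q ^ a / ((1 - q ^ a) * (1 - q ^ n))) := by
  have h := (hasSum_geometric_mul_geometric (pow_nonneg hq0 a) (pow_lt_one₀ hq0 hq1 ha)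
    (pow_nonneg hq0 n) (pow_lt_one₀ hq0 hq1 (by omega))).mul_left (q ^ a)
  rw [div_eq_mul_inv, mul_inv]
  refine h.congr_fun fun p => ?_
  subst hab
  ring

lemma dualCauchy_sum_eq_prod {q : ℝ} (hq0 : 0 < q) (hq1 : q < 1) {μ1 μ2 : ℕ}
    (hμq : q ^ μ2 - q ^ (μ1 + 1) ≠ 0) :
    (1 - q ^ 2) ^ 2 * (1 - q ^ 3) / (q * (q ^ μ2 - q ^ (μ1 + 1))) *
      (q ^ (μ1 + 3) / ((1 - q ^ (μ1 + 3)) * (1 - q ^ (μ1 + μ2 + 4)))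
        + q ^ (μ2 + 1) / ((1 - q ^ (μ2 + 1)) * (1 - q ^ (μ1 + μ2 + 4)))
        - (q ^ (μ1 + 2) / ((1 - q ^ (μ1 + 2)) * (1 - q ^ (μ1 + μ2 + 4)))
          + q ^ (μ2 + 2) / ((1 - q ^ (μ2 + 2)) * (1 - q ^ (μ1 + μ2 + 4))))) =
    (1 - q) * (1 - q ^ 2) / ((1 - q ^ (μ1 + 2)) * (1 - q ^ (μ1 + 3))) *
      ((1 - q ^ 2) * (1 - q ^ 3) / ((1 - q ^ (μ2 + 1)) * (1 - q ^ (μ2 + 2)))) := by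
  have hden (k : ℕ) (hk : k ≠ 0) : 1 - q ^ k ≠ 0 := (sub_pos.mpr (pow_lt_one₀ hq0.le hq1 hk)).ne'
  rw [div_mul_eq_mul_div, div_eq_iff (mul_ne_zero hq0.ne' hμq)]
  field_simp [hden (μ1 + 2), hden (μ1 + 3), hden (μ2 + 1), hden (μ2 + 2), hden (μ1 + μ2 + 4)]
  ring

/-- the dual Cauchy evaluation
`Σ_{λ1 ≥ λ2 ≥ 0} P_q(λ) s_μ(q^{λ1+1},q^{λ2})/s_μ(1,q)
  = ∏_{i=1}^2 (1−q^i)(1−q^{i+1})/((1−q^{μ_i−i+3})(1−q^{μ_i−i+4}))`. -/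
theorem stmt13 (q : ℝ) (hq0 : 0 < q) (hq1 : q < 1) (μ1 μ2 : ℕ) (hμ : μ2 ≤ μ1) :
    HasSum
      (fun l : ℕ × ℕ =>
        if l.2 ≤ l.1 then
          Pq q l.1 l.2 * s2 μ1 μ2 (q ^ (l.1 + 1)) (q ^ l.2) / s2 μ1 μ2 1 q
        else 0)
      (((1 - q) * (1 - q ^ 2) / ((1 - q ^ (μ1 + 2)) * (1 - q ^ (μ1 + 3)))) *
        ((1 - q ^ 2) * (1 - q ^ 3) / ((1 - q ^ (μ2 + 1)) * (1 - q ^ (μ2 + 2))))) := by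
  have hμq : q ^ μ2 - q ^ (μ1 + 1) ≠ 0 :=
    (sub_pos.mpr (pow_lt_pow_right_of_lt_one₀ hq0 hq1 (by omega))).ne'
  have hgeom (a b : ℕ) (ha : a ≠ 0) (hab : a + b = μ1 + μ2 + 4) :=
    hasSum_pow_mul_pow_triangle hq0.le hq1 ha hab
  have hmonomials := (((hgeom (μ1 + 3) (μ2 + 1) (by omega) (by omega)).add
    (hgeom (μ2 + 1) (μ1 + 3) (by omega) (by omega))).sub
    ((hgeom (μ1 + 2) (μ2 + 2) (by omega) (by omega)).add
      (hgeom (μ2 + 2) (μ1 + 2) (by omega) (by omega)))).mul_left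
    ((1 - q ^ 2) ^ 2 * (1 - q ^ 3) / (q * (q ^ μ2 - q ^ (μ1 + 1))))
  rw [hasSum_triangle_iff, ← dualCauchy_sum_eq_prod hq0 hq1 hμq]
  exact hmonomials.congr_fun fun p => Pq_mul_s2_div_s2_one hq0.ne' hq1.ne hμq _ _
end

section
/- Let 0 < q < 1 and let ν_1 ≥ ν_2 ≥ 0 be integers. Then Σ over all pairs of integers λ_1 ≥ λ_2 ≥ 0 of P_q(λ_1,λ_2) · P(λ→ν) converges and equals (1−q)²(1−q²)⁴(1−q³)² · s_{(ν_1,ν_2)}(1,q) · s_{(ν_1,ν_2)}(q,q²,q,q²), where s_{(ν_1,ν_2)}(v_1,v_2,v_3,v_4) = h_{ν_1}(v)·h_{ν_2}(v) − h_{ν_1+1}(v)·h_{ν_2−1}(v) is the Schur polynomial of the two-row partition (ν_1,ν_2) in four variables v = (q,q²,q,q²), with h_d(v) the complete homogeneous symmetric polynomial of degree d in the four variables (h_d := 0 for d < 0). In other words, the Markov transition P applied to the Schur measure P_q yields the Schur measure with specializations (1,q) and (q,q²,q,q²). -/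
open Finset

/-- Two-variable complete homogeneous symmetric polynomial
`h_d(x,y) = Σ_{i=0}^d x^i y^{d−i}` for `d ≥ 0`, and `h_d := 0` for `d < 0`. -/
noncomputable def h2 (d : ℤ) (x y : ℝ) : ℝ :=
  if d < 0 then 0 else ∑ i ∈ Finset.range (d.toNat + 1), x ^ i * y ^ (d.toNat - i)

/-- Two-variable skew Schur polynomial
`s_{ν/λ}(x,y) = h_{ν1−λ1} h_{ν2−λ2} − h_{ν1−λ2+1} h_{ν2−λ1−1}`. -/
noncomputable def sskew2 (n1 n2 l1 l2 : ℕ) (x y : ℝ) : ℝ :=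
  h2 ((n1 : ℤ) - l1) x y * h2 ((n2 : ℤ) - l2) x y -
    h2 ((n1 : ℤ) - l2 + 1) x y * h2 ((n2 : ℤ) - l1 - 1) x y

/-- The Markov transition weight
`P(λ→ν) = (1−q)(1−q²)²(1−q³) s_ν(1,q) s_{ν/λ}(q,q²) / s_λ(1,q)`. -/
noncomputable def Ptrans (q : ℝ) (l1 l2 n1 n2 : ℕ) : ℝ :=
  (1 - q) * (1 - q ^ 2) ^ 2 * (1 - q ^ 3) * s2 n1 n2 1 q * sskew2 n1 n2 l1 l2 q (q ^ 2) /
    s2 l1 l2 1 q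

/-- Complete homogeneous symmetric polynomial of degree `d` (`h_d := 0` for `d < 0`) in
finitely many variables: the sum over all `d`-element multisets of the variables of the
product of their entries. -/
noncomputable def hh {ι : Type*} [Fintype ι] [DecidableEq ι] (d : ℤ) (v : ι → ℝ) : ℝ :=
  if d < 0 then 0
  else ∑ s ∈ (Finset.univ : Finset ι).sym d.toNat, ((s : Multiset ι).map v).prod

/-- Schur polynomial of the two-row partition `(n1, n2)` in four variables,
`s_{(n1,n2)}(v) = h_{n1}(v) h_{n2}(v) − h_{n1+1}(v) h_{n2−1}(v)`. -/
noncomputable def s4 (n1 n2 : ℕ) (v : Fin 4 → ℝ) : ℝ :=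
  hh (n1 : ℤ) v * hh (n2 : ℤ) v - hh ((n1 : ℤ) + 1) v * hh ((n2 : ℤ) - 1) v

/-!
For `λ₂ ≤ λ₁` we have `s_λ(1,q) > 0`, so it cancels and
`P_q(λ) P(λ → ν) = c² s_ν(1,q) · s_λ(q,q²) s_{ν/λ}(q,q²)` with `c = (1-q)(1-q²)²(1-q³)`;
as `s_{ν/λ} = 0` unless `λ₁ ≤ ν₁`, the series is a finite sum. What remains is the branching
rule `s_ν(x,y,x,y) = Σ_λ s_λ(x,y) s_{ν/λ}(x,y)`. Multiplying generating series gives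
`h_m(x,y,x,y) = Σ_k h_{m-k}(x,y) h_k(x,y)`, so the `2 × 2` Jacobi–Trudi determinant of
`s_ν(x,y,x,y)` is that of the product of a `2 × N` and an `N × 2` matrix of two-variable `h`'s,
and the Cauchy–Binet formula expands it into products of `2 × 2` minors, which are exactly
`s_λ(x,y) s_{ν/λ}(x,y)`.
-/

theorem sum_range_mul_sum_sub_sum_mul_sum {R : Type*} [CommRing R] (f₁ f₂ g₁ g₂ : ℕ → R)
    (N : ℕ) :
    (∑ k ∈ range N, f₁ k * g₁ k) * (∑ k ∈ range N, f₂ k * g₂ k) -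
        (∑ k ∈ range N, f₁ k * g₂ k) * (∑ k ∈ range N, f₂ k * g₁ k) =
      ∑ j ∈ range N, ∑ i ∈ range j,
        (f₁ i * f₂ j - f₁ j * f₂ i) * (g₁ i * g₂ j - g₁ j * g₂ i) := by
  induction N with
  | zero => simp
  | succ N ih =>
    have hlast : ∑ i ∈ range N, (f₁ i * f₂ N - f₁ N * f₂ i) * (g₁ i * g₂ N - g₁ N * g₂ i) =
        (∑ k ∈ range N, f₁ k * g₁ k) * (f₂ N * g₂ N) + (∑ k ∈ range N, f₂ k * g₂ k) * (f₁ N * g₁ N)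
          - (∑ k ∈ range N, f₁ k * g₂ k) * (f₂ N * g₁ N)
          - (∑ k ∈ range N, f₂ k * g₁ k) * (f₁ N * g₂ N) := by
      simp only [sum_mul, ← sum_add_distrib, ← sum_sub_distrib]
      exact sum_congr rfl fun i _ => by ring
    simp only [sum_range_succ]
    rw [hlast, ← ih]
    ring

theorem sum_range_product_ite_le {M : Type*} [AddCommMonoid M] (g : ℕ → ℕ → M) (N : ℕ) :
    ∑ l ∈ range N ×ˢ range N, (if l.2 ≤ l.1 then g l.1 l.2 else 0) =
      ∑ l1 ∈ range N, ∑ l2 ∈ range (l1 + 1), g l1 l2 := by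
  rw [sum_product]
  refine sum_congr rfl fun l1 hl1 => ?_
  rw [← sum_filter]
  congr 1
  ext l2
  simp only [mem_filter, mem_range] at hl1 ⊢
  omega

section CompleteHomogeneous

variable {ι κ : Type*} [Fintype ι] [DecidableEq ι] [Fintype κ] [DecidableEq κ]

lemma hh_natCast (n : ℕ) (v : ι → ℝ) :
    hh (n : ℤ) v = ∑ s : Sym ι n, ((s : Multiset ι).map v).prod := by
  simp [hh, sym_univ]

lemma hh_of_neg {d : ℤ} (hd : d < 0) (v : ι → ℝ) : hh d v = 0 := if_pos hd

lemma hh_zero (v : ι → ℝ) : hh 0 v = 1 := by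
  simp [hh]; rfl

lemma hh_comp_equiv (d : ℤ) (e : ι ≃ κ) (v : κ → ℝ) : hh d (v ∘ e) = hh d v := by
  rcases lt_or_ge d 0 with hd | hd
  · rw [hh_of_neg hd, hh_of_neg hd]
  · lift d to ℕ using hd
    rw [hh_natCast, hh_natCast]
    refine Fintype.sum_equiv (Sym.equivCongr e) _ _ fun s => ?_
    simp [Sym.equivCongr, Multiset.map_map]

lemma hh_option_succ (n : ℕ) (v : Option ι → ℝ) :
    hh ((n + 1 : ℕ) : ℤ) v = v none * hh (n : ℤ) v + hh ((n + 1 : ℕ) : ℤ) (v ∘ some) := by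
  rw [hh_natCast, hh_natCast, hh_natCast, ← (symOptionSuccEquiv (α := ι)).symm.sum_comp,
    Fintype.sum_sum_type, Finset.mul_sum]
  congr 1 <;> refine Fintype.sum_congr _ _ fun s => ?_
  · simp [symOptionSuccEquiv, Sym.coe_cons]
  · simp [symOptionSuccEquiv, Multiset.map_map]

end CompleteHomogeneous

section FinCons

open PowerSeries

variable {k : ℕ}

lemma hh_fin_cons_succ (n : ℕ) (a : ℝ) (v : Fin k → ℝ) :
    hh ((n + 1 : ℕ) : ℤ) (Fin.cons a v : Fin (k + 1) → ℝ) =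
      a * hh (n : ℤ) (Fin.cons a v : Fin (k + 1) → ℝ) + hh ((n + 1 : ℕ) : ℤ) v := by
  have hv : (Fin.cons a v : Fin (k + 1) → ℝ) = (fun o => o.elim a v) ∘ finSuccEquiv k := by
    funext i
    induction i using Fin.cases <;> simp
  rw [hv, hh_comp_equiv, hh_comp_equiv, hh_option_succ]
  rfl

lemma hh_fin_cons (m : ℕ) (a : ℝ) (v : Fin k → ℝ) :
    hh (m : ℤ) (Fin.cons a v : Fin (k + 1) → ℝ) =
      ∑ p ∈ antidiagonal m, a ^ p.1 * hh (p.2 : ℤ) v := by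
  induction m with
  | zero => simp [hh_zero]
  | succ m ih =>
    rw [hh_fin_cons_succ, ih, Finset.Nat.sum_antidiagonal_succ, Finset.mul_sum, add_comm]
    simp only [pow_succ, pow_zero, one_mul, mul_assoc, mul_comm a]

noncomputable def hhSeries {ι : Type*} [Fintype ι] [DecidableEq ι] (v : ι → ℝ) : ℝ⟦X⟧ :=
  mk fun d => hh (d : ℤ) v

lemma hhSeries_fin_zero (v : Fin 0 → ℝ) : hhSeries v = 1 := by
  ext (_ | m)
  · simp [hhSeries, hh_zero]
  · simp [hhSeries, hh_natCast, coeff_one]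

lemma hhSeries_fin_cons (a : ℝ) (v : Fin k → ℝ) :
    hhSeries (Fin.cons a v : Fin (k + 1) → ℝ) = mk (a ^ ·) * hhSeries v := by
  ext m
  simp [hhSeries, coeff_mul, hh_fin_cons]

variable {x y : ℝ}

lemma h2_natCast_eq_hh (d : ℕ) : h2 (d : ℤ) x y = hh (d : ℤ) ![x, y] := by
  have h : hhSeries ![x, y] = mk (x ^ ·) * mk (y ^ ·) := by
    simp only [Matrix.vecCons, hhSeries_fin_cons, hhSeries_fin_zero, mul_one]
  have := congr(coeff d $h)
  rw [hhSeries, coeff_mk, coeff_mul] at this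
  rw [this, h2, if_neg (by omega), Int.toNat_natCast,
    Finset.Nat.sum_antidiagonal_eq_sum_range_succ
      fun i j => coeff i (mk (x ^ ·)) * coeff j (mk (y ^ ·))]
  simp only [coeff_mk]

lemma hh_xyxy (m : ℕ) :
    hh (m : ℤ) ![x, y, x, y] = ∑ p ∈ antidiagonal m, h2 (p.1 : ℤ) x y * h2 (p.2 : ℤ) x y := by
  have h : hhSeries ![x, y, x, y] = hhSeries ![x, y] * hhSeries ![x, y] := by
    simp only [Matrix.vecCons, hhSeries_fin_cons, hhSeries_fin_zero]
    ring
  simpa [hhSeries, coeff_mul, h2_natCast_eq_hh] using congr(coeff m $h)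

end FinCons

section TwoVariables

variable {x y : ℝ}

lemma h2_of_neg {d : ℤ} (hd : d < 0) : h2 d x y = 0 := if_pos hd

lemma h2_natCast_sub_one_mul_sub (d : ℕ) : h2 ((d : ℤ) - 1) x y * (x - y) = x ^ d - y ^ d := by
  rcases d with _ | d
  · simp [h2_of_neg]
  · rw [Nat.cast_succ, add_sub_cancel_right, h2, if_neg (by omega), Int.toNat_natCast,
      ← geom_sum₂_mul, Nat.add_sub_cancel]

lemma s2_eq_jacobiTrudi (hxy : x ≠ y) (l1 l2 : ℕ) :
    s2 l1 l2 x y =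
      h2 (l1 : ℤ) x y * h2 (l2 : ℤ) x y - h2 ((l1 : ℤ) + 1) x y * h2 ((l2 : ℤ) - 1) x y := by
  have hsub : x - y ≠ 0 := sub_ne_zero.mpr hxy
  have e1 := h2_natCast_sub_one_mul_sub (x := x) (y := y) (l1 + 1)
  have e2 := h2_natCast_sub_one_mul_sub (x := x) (y := y) (l2 + 1)
  have e3 := h2_natCast_sub_one_mul_sub (x := x) (y := y) (l1 + 2)
  have e4 := h2_natCast_sub_one_mul_sub (x := x) (y := y) l2
  push_cast at e1 e2 e3
  rw [add_sub_cancel_right] at e1 e2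
  rw [show (l1 : ℤ) + 2 - 1 = l1 + 1 by ring] at e3
  rw [s2, div_eq_iff hsub]
  apply mul_right_cancel₀ hsub
  linear_combination (-(h2 (l2 : ℤ) x y * (x - y))) * e1 - (x ^ (l1 + 1) - y ^ (l1 + 1)) * e2
    + (h2 ((l2 : ℤ) - 1) x y * (x - y)) * e3 + (x ^ (l1 + 2) - y ^ (l1 + 2)) * e4

end TwoVariables

section Convolution

variable {x y : ℝ}

lemma sum_range_h2_mul_h2 {m : ℤ} {N : ℕ} (hm : m < N) :
    ∑ k ∈ range N, h2 (m - k) x y * h2 (k : ℤ) x y = hh m ![x, y, x, y] := by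
  rcases lt_or_ge m 0 with hneg | hnn
  · rw [hh_of_neg hneg]
    exact sum_eq_zero fun k _ => by rw [h2_of_neg (by omega), zero_mul]
  lift m to ℕ using hnn
  have hsub : range (m + 1) ⊆ range N := range_subset_range.mpr (by omega)
  rw [hh_xyxy, ← Finset.Nat.sum_antidiagonal_swap]
  simp only [Prod.fst_swap, Prod.snd_swap]
  rw [Finset.Nat.sum_antidiagonal_eq_sum_range_succ
    (fun i j => h2 (j : ℤ) x y * h2 (i : ℤ) x y), ← sum_subset hsub]
  · refine sum_congr rfl fun k hk => ?_
    rw [Nat.cast_sub (by simp only [mem_range] at hk; omega)]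
  · intro k _ hk
    rw [h2_of_neg (by simp only [mem_range, not_lt] at hk; omega), zero_mul]

lemma sum_range_h2_mul_h2_sub_one {m : ℤ} {N : ℕ} (hm : m < N) :
    ∑ k ∈ range N, h2 (m - k) x y * h2 ((k : ℤ) - 1) x y = hh (m - 1) ![x, y, x, y] := by
  rcases N with _ | N
  · rw [hh_of_neg (d := m - 1) (by omega), sum_range_zero]
  rw [sum_range_succ', ← sum_range_h2_mul_h2 (by omega : m - 1 < N)]
  simp only [Nat.cast_zero, zero_sub, h2_of_neg (by omega : (-1 : ℤ) < 0), mul_zero, add_zero,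
    Nat.cast_succ, add_sub_cancel_right, sub_add_eq_sub_sub_swap]

end Convolution

section Branching

variable {x y : ℝ}

theorem sum_s2_mul_sskew2 (hxy : x ≠ y) {n1 n2 : ℕ} (hn : n2 ≤ n1) :
    ∑ l1 ∈ range (n1 + 1), ∑ l2 ∈ range (l1 + 1), s2 l1 l2 x y * sskew2 n1 n2 l1 l2 x y =
      s4 n1 n2 ![x, y, x, y] := by
  -- Cauchy–Binet; the minor at columns `(i, j) = (λ₂, λ₁ + 1)` is `s_λ · s_{ν/λ}`.
  have h := sum_range_mul_sum_sub_sum_mul_sum (fun k => h2 ((n1 : ℤ) + 1 - k) x y)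
    (fun k => h2 ((n2 : ℤ) - k) x y) (fun k => h2 ((k : ℤ) - 1) x y) (fun k => h2 (k : ℤ) x y)
    (n1 + 1 + 1)
  rw [sum_range_h2_mul_h2_sub_one (by omega), sum_range_h2_mul_h2 (by omega),
    sum_range_h2_mul_h2 (by omega), sum_range_h2_mul_h2_sub_one (by omega),
    add_sub_cancel_right] at h
  rw [s4, h, sum_range_succ' _ (n1 + 1), sum_range_zero, add_zero]
  refine sum_congr rfl fun l1 _ => sum_congr rfl fun l2 _ => ?_
  rw [s2_eq_jacobiTrudi hxy, sskew2]
  push_cast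
  ring_nf

section Transition

variable {q : ℝ}

lemma s2_one_pos (hq0 : 0 < q) (hq1 : q < 1) {l1 l2 : ℕ} (h : l2 ≤ l1) : 0 < s2 l1 l2 1 q := by
  have : q ^ (l1 + 1) < q ^ l2 := pow_lt_pow_right_of_lt_one₀ hq0 hq1 (by omega)
  rw [s2, one_pow, one_pow, mul_one, one_mul]
  exact div_pos (by linarith) (by linarith)

lemma sskew2_eq_zero_of_lt {x y : ℝ} {n1 n2 l1 l2 : ℕ} (hn : n2 ≤ n1) (hl : n1 < l1) :
    sskew2 n1 n2 l1 l2 x y = 0 := by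
  rw [sskew2, h2_of_neg (by omega : (n1 : ℤ) - l1 < 0),
    h2_of_neg (by omega : (n2 : ℤ) - l1 - 1 < 0), zero_mul, mul_zero, sub_zero]

lemma Pq_mul_Ptrans (hq0 : 0 < q) (hq1 : q < 1) {l1 l2 : ℕ} (h : l2 ≤ l1) (n1 n2 : ℕ) :
    Pq q l1 l2 * Ptrans q l1 l2 n1 n2 =
      (1 - q) ^ 2 * (1 - q ^ 2) ^ 4 * (1 - q ^ 3) ^ 2 * s2 n1 n2 1 q *
        (s2 l1 l2 q (q ^ 2) * sskew2 n1 n2 l1 l2 q (q ^ 2)) := by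
  have := (s2_one_pos hq0 hq1 h).ne'
  rw [Pq, Ptrans]
  field_simp

end Transition

/-- applying the Markov transition `P` to the Schur measure `P_q` yields the
Schur measure with specializations `(1,q)` and `(q,q²,q,q²)`. -/
theorem stmt16 (q : ℝ) (hq0 : 0 < q) (hq1 : q < 1) (n1 n2 : ℕ) (hn : n2 ≤ n1) :
    HasSum
      (fun l : ℕ × ℕ => if l.2 ≤ l.1 then Pq q l.1 l.2 * Ptrans q l.1 l.2 n1 n2 else 0)
      ((1 - q) ^ 2 * (1 - q ^ 2) ^ 4 * (1 - q ^ 3) ^ 2 * s2 n1 n2 1 q *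
        s4 n1 n2 ![q, q ^ 2, q, q ^ 2]) := by
  have hq : q ≠ q ^ 2 := (pow_lt_self_of_lt_one₀ hq0 hq1 one_lt_two).ne'
  have hsum : ∑ l1 ∈ range (n1 + 1), ∑ l2 ∈ range (l1 + 1), Pq q l1 l2 * Ptrans q l1 l2 n1 n2 =
      (1 - q) ^ 2 * (1 - q ^ 2) ^ 4 * (1 - q ^ 3) ^ 2 * s2 n1 n2 1 q *
        s4 n1 n2 ![q, q ^ 2, q, q ^ 2] := by
    rw [← sum_s2_mul_sskew2 hq hn, mul_sum]
    refine sum_congr rfl fun l1 _ => ?_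
    rw [mul_sum]
    exact sum_congr rfl fun l2 hl2 =>
      Pq_mul_Ptrans hq0 hq1 (Nat.lt_succ_iff.mp (mem_range.mp hl2)) n1 n2
  rw [← hsum, ← sum_range_product_ite_le]
  refine hasSum_sum_of_ne_finset_zero fun l hl => ?_
  split_ifs with hle
  · have hl1 : n1 < l.1 := by simp only [mem_product, mem_range] at hl; omega
    rw [Ptrans, sskew2_eq_zero_of_lt hn hl1, mul_zero, zero_div, mul_zero]
  · rfl
end Branching
end
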